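/- Consider a partially input convex neural network (PICNN) with a fixed input x, so that the x-path values u_0 = x, u_{i+1} = g̃_i(W̃_i u_i + b̃_i) are fixed vectors, and the y-path is defined by z_{i+1} = g_i( W_i^{(z)}( z_i ∘ max(0, W_i^{(zu)} u_i + b_i^{(z)}) ) + W_i^{(y)}( y ∘ (W_i^{(yu)} u_i + b_i^{(y)}) ) + W_i^{(u)} u_i + b_i ) for i = 0, …, k−1 (with z_0 = 0 and W_0^{(z)} = 0), and f(x, y) = z_k. If every entry of each matrix W_i^{(z)} for i = 1, …, k−1 is nonnegative and every activation g_i : ℝ → ℝ (applied elementwise) is convex and nondecreasing, then y ↦ f(x, y) is a convex function on ℝ^p. -/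

import Mathlib

/-!
By induction on the layer, every coordinate of `z i` is convex in `y`. Since the `x`-path
values `uᵢ` do not depend on `y`, the `y`-term of layer `i` is linear in `y`, and the `z`-term
is `0` for `i = 0` and otherwise a combination of the convex coordinates of `zᵢ` with the
nonnegative weights `Wᵢ⁽ᶻ⁾ j r * max 0 (…)`. So the argument of `gᵢ` is convex, and composing
with the convex nondecreasing `gᵢ` keeps it convex.
-/

open Set Matrix

section

variable {𝕜 E β γ ι : Type*} [Semiring 𝕜] [PartialOrder 𝕜] [AddCommMonoid E] [SMul 𝕜 E]
  [AddCommMonoid β] [PartialOrder β] [AddCommMonoid γ] [PartialOrder γ]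
  {s : Set E} {f : E → β}

theorem ConvexOn.comp_of_monotone [SMul 𝕜 β] [SMul 𝕜 γ] {g : β → γ} (hg : ConvexOn 𝕜 univ g)
    (hg' : Monotone g) (hf : ConvexOn 𝕜 s f) : ConvexOn 𝕜 s (g ∘ f) :=
  ⟨hf.1, fun _ hx _ hy _ _ ha hb hab =>
    (hg' (hf.2 hx hy ha hb hab)).trans (hg.2 trivial trivial ha hb hab)⟩

theorem ConvexOn.sum [IsOrderedAddMonoid β] [Module 𝕜 β] (t : Finset ι) {f : ι → E → β}
    (hs : Convex 𝕜 s) (hf : ∀ i ∈ t, ConvexOn 𝕜 s (f i)) :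
    ConvexOn 𝕜 s fun x => ∑ i ∈ t, f i x := by
  classical
  induction t using Finset.induction_on with
  | empty => simpa using convexOn_const 0 hs
  | insert i t hi ih =>
    simp only [Finset.sum_insert hi]
    exact (hf i (t.mem_insert_self i)).add (ih fun j hj => hf j (Finset.mem_insert_of_mem hj))

end

section

variable {𝕜 ι κ : Type*} [CommRing 𝕜] [PartialOrder 𝕜] [Fintype ι]

theorem convexOn_mulVec_apply_of_nonneg {E : Type*} [AddCommMonoid E] [SMul 𝕜 E]
    [IsOrderedRing 𝕜] {s : Set E} {A : Matrix κ ι 𝕜} (hA : ∀ j r, 0 ≤ A j r)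
    {v : E → ι → 𝕜} (hs : Convex 𝕜 s) (hv : ∀ r, ConvexOn 𝕜 s fun x => v x r) (j : κ) :
    ConvexOn 𝕜 s fun x => (A *ᵥ v x) j :=
  ConvexOn.sum _ hs fun r _ => (hv r).smul (hA j r)

theorem convexOn_mulVec_hadamard_apply (B : Matrix κ ι 𝕜) (c : ι → 𝕜) (j : κ) :
    ConvexOn 𝕜 univ fun y : ι → 𝕜 => (B *ᵥ fun r => y r * c r) j := by
  classical
  have hlin : (fun y : ι → 𝕜 => (B *ᵥ fun r => y r * c r) j)
      = LinearMap.proj j ∘ₗ B.mulVecLin ∘ₗ (diagonal c).mulVecLin := by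
    ext y
    change (B *ᵥ fun r => y r * c r) j = (B *ᵥ (diagonal c *ᵥ y)) j
    congr 2 with r
    rw [mulVec_diagonal, mul_comm]
  rw [hlin]
  exact LinearMap.convexOn _ convex_univ

end

theorem picnn_convex_in_y
    (k p : ℕ)
    (d e : ℕ → ℕ) (hdk : d k = 1)
    (Wz : (i : ℕ) → Matrix (Fin (d (i + 1))) (Fin (d i)) ℝ)
    (Wzu : (i : ℕ) → Matrix (Fin (d i)) (Fin (e i)) ℝ)
    (bz : (i : ℕ) → Fin (d i) → ℝ)
    (Wy : (i : ℕ) → Matrix (Fin (d (i + 1))) (Fin p) ℝ)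
    (Wyu : (i : ℕ) → Matrix (Fin p) (Fin (e i)) ℝ)
    (by' : (i : ℕ) → Fin p → ℝ)
    (Wu : (i : ℕ) → Matrix (Fin (d (i + 1))) (Fin (e i)) ℝ)
    (b : (i : ℕ) → Fin (d (i + 1)) → ℝ)
    (g : ℕ → ℝ → ℝ)
    (hW : ∀ i, 1 ≤ i → i < k → ∀ r c, 0 ≤ Wz i r c)
    (hgconv : ∀ i, i < k → ConvexOn ℝ Set.univ (g i))
    (hgmono : ∀ i, i < k → Monotone (g i))
    (u : (i : ℕ) → Fin (e i) → ℝ)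
    (z : (i : ℕ) → (Fin p → ℝ) → Fin (d i) → ℝ)
    (hz0 : ∀ y, z 0 y = 0)
    (hzrec : ∀ i y, z (i + 1) y = fun j =>
      g i ((Wz i).mulVec (fun r => z i y r * max 0 ((Wzu i).mulVec (u i) r + bz i r)) j
        + (Wy i).mulVec (fun r => y r * ((Wyu i).mulVec (u i) r + by' i r)) j
        + (Wu i).mulVec (u i) j + b i j))
    (f : (Fin p → ℝ) → ℝ)
    (hf : ∀ y, f y = z k y ⟨0, by omega⟩) :
    ConvexOn ℝ Set.univ f := by
  have hlayer : ∀ i < k, (∀ r, ConvexOn ℝ univ fun y => z i y r) →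
      ∀ j, ConvexOn ℝ univ fun y => z (i + 1) y j := by
    intro i hi hzi j
    have hzterm : ConvexOn ℝ univ fun y =>
        (Wz i *ᵥ fun r => z i y r * max 0 ((Wzu i *ᵥ u i) r + bz i r)) j := by
      rcases Nat.eq_zero_or_pos i with rfl | hpos
      · simp only [hz0, Pi.zero_apply, zero_mul, ← Pi.zero_def, mulVec_zero]
        exact convexOn_const 0 convex_univ
      · refine convexOn_mulVec_apply_of_nonneg (hW i hpos hi) convex_univ (fun r => ?_) j
        simpa only [smul_eq_mul, mul_comm] using (hzi r).smul (le_max_left 0 _)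
    have hyterm := convexOn_mulVec_hadamard_apply (Wy i) (fun r => (Wyu i *ᵥ u i) r + by' i r) j
    simp only [hzrec]
    exact ConvexOn.comp_of_monotone (hgconv i hi) (hgmono i hi)
      (((hzterm.add hyterm).add_const _).add_const _)
  have hz : ∀ i ≤ k, ∀ j, ConvexOn ℝ univ fun y => z i y j := by
    intro i
    induction i with
    | zero => exact fun _ _ => by simpa [hz0] using convexOn_const (0 : ℝ) convex_univ
    | succ i ih => exact fun hi => hlayer i hi (ih (Nat.le_of_succ_le hi))
  rw [funext hf]
  exact hz k le_rfl _
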